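/- arXiv:1712.03638 — 2 statements merged into one kernel-verified Lean document; each statement's English description precedes it below -/
import Mathlib

section
/- Let A, B, C, D be independent n×n random matrices each with i.i.d. standard Gaussian entries, and let P, P⊥ be orthogonal projection matrices in ℝⁿˣⁿ with P + P⊥ = I. Then the matrix X = P⊥AP + PBP + P⊥CP⊥ + PDP⊥ has i.i.d. standard Gaussian entries. -/
open MeasureTheory ProbabilityTheory

open Matrix Set

noncomputable def stdGauss (ι : Type*) [Fintype ι] : Measure (ι → ℝ) :=
  Measure.pi fun _ : ι => gaussianReal 0 1

lemma lintegral_pi_prod {ι : Type*} [Fintype ι] [DecidableEq ι] (μ : ι → Measure ℝ)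
    [∀ i, SigmaFinite (μ i)] (f : ι → ℝ → ENNReal) (hf : ∀ i, Measurable (f i)) :
    ∫⁻ x, ∏ i, f i (x i) ∂Measure.pi μ = ∏ i, ∫⁻ y, f i y ∂μ i := by
  classical
  have hmeas : Measurable fun x : ι → ℝ => ∏ i, f i (x i) :=
    Finset.measurable_prod _ fun i _ => (hf i).comp (measurable_pi_apply i)
  have key : ∀ s : Finset ι, ∀ x : ι → ℝ,
      (∫⋯∫⁻_s, (fun x => ∏ i, f i (x i)) ∂μ) x
        = (∏ i ∈ s, ∫⁻ y, f i y ∂μ i) * ∏ i ∈ sᶜ, f i (x i) := by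
    intro s
    induction s using Finset.induction_on with
    | empty => intro x; simp
    | @insert j s hj ih =>
      intro x
      rw [MeasureTheory.lmarginal_insert _ hmeas hj]
      have hjc : j ∈ sᶜ := Finset.mem_compl.2 hj
      have hstep : ∀ t : ℝ,
          (∫⋯∫⁻_s, (fun x => ∏ i, f i (x i)) ∂μ) (Function.update x j t)
            = ((∏ i ∈ s, ∫⁻ y, f i y ∂μ i) * ∏ i ∈ sᶜ.erase j, f i (x i)) * f j t := by
        intro t
        rw [ih]
        rw [← Finset.mul_prod_erase _ _ hjc]
        have : ∀ i ∈ sᶜ.erase j, f i (Function.update x j t i) = f i (x i) := by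
          intro i hi
          rw [Function.update_of_ne (Finset.ne_of_mem_erase hi)]
        rw [Function.update_self, Finset.prod_congr rfl this]
        ring
      simp_rw [hstep]
      rw [lintegral_const_mul _ (hf j)]
      rw [Finset.prod_insert hj, Finset.compl_insert]
      ring
  have := key Finset.univ (fun _ => 0)
  rw [lintegral_eq_lmarginal_univ (fun _ => (0:ℝ)), this]
  simp

lemma stdGauss_eq_withDensity (ι : Type*) [Fintype ι] [DecidableEq ι] :
    stdGauss ι
      = (volume : Measure (ι → ℝ)).withDensity fun x => ∏ i, gaussianPDF 0 1 (x i) := by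
  have hd : Measurable fun x : ι → ℝ => ∏ i, gaussianPDF 0 1 (x i) :=
    Finset.measurable_prod _ fun i _ =>
      (measurable_gaussianPDF 0 1).comp (measurable_pi_apply i)
  refine (Measure.pi_eq fun s hs => ?_)
  rw [withDensity_apply _ (MeasurableSet.univ_pi hs), ← lintegral_indicator (MeasurableSet.univ_pi hs) (fun x => ∏ i, gaussianPDF 0 1 (x i))]
  have hind : (Set.univ.pi s).indicator (fun x => ∏ i, gaussianPDF 0 1 (x i))
      = fun x => ∏ i, (s i).indicator (gaussianPDF 0 1) (x i) := by
    funext x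
    by_cases hx : x ∈ Set.univ.pi s
    · rw [Set.indicator_of_mem hx]
      exact Finset.prod_congr rfl fun i _ =>
        (Set.indicator_of_mem (hx i (Set.mem_univ i)) _).symm
    · rw [Set.indicator_of_notMem hx]
      have hx' : ∃ i, x i ∉ s i := by
        by_contra hc
        push_neg at hc
        exact hx fun i _ => hc i
      obtain ⟨i, hi⟩ := hx'
      exact (Finset.prod_eq_zero (Finset.mem_univ i)
        (by rw [Set.indicator_of_notMem hi])).symm
  rw [hind, MeasureTheory.volume_pi, lintegral_pi_prod _ _
    (fun i => (measurable_gaussianPDF 0 1).indicator (hs i))]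
  refine Finset.prod_congr rfl fun i _ => ?_
  rw [lintegral_indicator (hs i), gaussianReal_apply 0 one_ne_zero (s i)]

lemma prod_gaussianPDF {ι : Type*} [Fintype ι] (y : ι → ℝ) :
    ∏ i, gaussianPDF 0 1 (y i)
      = ENNReal.ofReal ((Real.sqrt (2 * Real.pi))⁻¹ ^ Fintype.card ι
          * Real.exp (-(∑ i, y i ^ 2) / 2)) := by
  simp only [gaussianPDF]
  rw [← ENNReal.ofReal_prod_of_nonneg (fun i _ => gaussianPDFReal_nonneg 0 1 (y i))]
  congr 1
  have : ∀ i, gaussianPDFReal 0 1 (y i)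
      = (Real.sqrt (2 * Real.pi))⁻¹ * Real.exp (-(y i ^ 2) / 2) := by
    intro i
    simp [gaussianPDFReal]
  rw [Finset.prod_congr rfl fun i _ => this i, Finset.prod_mul_distrib,
    Finset.prod_const, ← Real.exp_sum]
  rw [show (∑ x, -y x ^ 2 / 2) = (-∑ i, y i ^ 2) / 2 by
    rw [← Finset.sum_div, ← Finset.sum_neg_distrib], Finset.card_univ]

lemma sum_sq_mulVec {κ : Type*} [Fintype κ] [DecidableEq κ] {Q : Matrix κ κ ℝ}
    (hQ : Qᵀ * Q = 1) (x : κ → ℝ) :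
    ∑ i, (Q.mulVec x i) ^ 2 = ∑ i, x i ^ 2 := by
  have h1 : Q.mulVec x ⬝ᵥ Q.mulVec x = x ⬝ᵥ x := by
    conv_lhs => rw [Matrix.dotProduct_mulVec]
    rw [show Q.mulVec x = Matrix.vecMul x Qᵀ by
        rw [← Matrix.transpose_transpose Q, Matrix.mulVec_transpose, Matrix.transpose_transpose]]
    rw [Matrix.vecMul_vecMul, hQ, Matrix.vecMul_one]
  simpa [dotProduct, pow_two] using h1

lemma measurable_mulVec {ι κ : Type*} [Fintype ι] [Fintype κ] (M : Matrix ι κ ℝ) :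
    Measurable (M.mulVec : (κ → ℝ) → ι → ℝ) := by
  apply measurable_pi_lambda
  intro i
  have : (fun x : κ → ℝ => M.mulVec x i) = fun x => ∑ k, M i k * x k := by
    funext x; simp [Matrix.mulVec, dotProduct]
  rw [this]
  exact Finset.measurable_sum _ fun k _ => (measurable_pi_apply k).const_mul _

lemma map_mulVec_volume {κ : Type*} [Fintype κ] [DecidableEq κ] {Q : Matrix κ κ ℝ}
    (hdet : |Q.det| = 1) :
    Measure.map Q.mulVec (volume : Measure (κ → ℝ)) = volume := by
  have hne : Q.det ≠ 0 := by
    intro h0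
    rw [h0] at hdet
    simp at hdet
  have h := Real.map_matrix_volume_pi_eq_smul_volume_pi hne
  have hco : (Matrix.toLin' Q : (κ → ℝ) →ₗ[ℝ] (κ → ℝ)) = Matrix.mulVecLin Q := by
    rfl
  have hfe : ⇑(Matrix.toLin' Q) = Q.mulVec := by
    funext x; exact Matrix.toLin'_apply Q x
  rw [hfe] at h
  rw [h, abs_inv, hdet]
  simp

lemma abs_det_of_orth {κ : Type*} [Fintype κ] [DecidableEq κ] {Q : Matrix κ κ ℝ}
    (hQ : Q * Qᵀ = 1) : |Q.det| = 1 := by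
  have h : Q.det * Q.det = 1 := by
    have := congrArg Matrix.det hQ
    rwa [Matrix.det_mul, Matrix.det_transpose, Matrix.det_one] at this
  rcases mul_self_eq_one_iff.1 h with h1 | h1 <;> rw [h1] <;> norm_num

lemma stdGauss_map_orth {κ : Type*} [Fintype κ] [DecidableEq κ] {Q : Matrix κ κ ℝ}
    (hQ : Q * Qᵀ = 1) :
    Measure.map Q.mulVec (stdGauss κ) = stdGauss κ := by
  have hQtQ : Qᵀ * Q = 1 := mul_eq_one_comm.1 hQ
  have hT : Measurable (Q.mulVec : (κ → ℝ) → κ → ℝ) := measurable_mulVec Q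
  have hg : Measurable fun x : κ → ℝ => ∏ i, gaussianPDF 0 1 (x i) :=
    Finset.measurable_prod _ fun i _ =>
      (measurable_gaussianPDF 0 1).comp (measurable_pi_apply i)
  have hvol : Measure.map Q.mulVec (volume : Measure (κ → ℝ)) = volume :=
    map_mulVec_volume (abs_det_of_orth hQ)
  have hginv : ∀ x, (fun x : κ → ℝ => ∏ i, gaussianPDF 0 1 (x i)) (Q.mulVec x)
      = ∏ i, gaussianPDF 0 1 (x i) := by
    intro x
    simp only [prod_gaussianPDF, sum_sq_mulVec hQtQ]
  ext s hs
  rw [Measure.map_apply hT hs, stdGauss_eq_withDensity,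
    withDensity_apply _ (hT hs), withDensity_apply _ hs]
  conv_rhs => rw [← hvol]
  rw [MeasureTheory.setLIntegral_map hs hg hT]
  exact setLIntegral_congr_fun (hT hs) (fun x _ => (hginv x).symm)

lemma stdGauss_map_marginal {ι κ : Type*} [Fintype ι] [Fintype κ] [DecidableEq ι]
    [DecidableEq κ] {e : ι → κ} (he : Function.Injective e) :
    Measure.map (fun (y : κ → ℝ) (i : ι) => y (e i)) (stdGauss κ) = stdGauss ι := by
  classical
  have hmeas : Measurable fun (y : κ → ℝ) (i : ι) => y (e i) :=
    measurable_pi_lambda _ fun i => measurable_pi_apply (e i)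
  refine (Measure.pi_eq fun s hs => ?_).symm
  set t : κ → Set ℝ := fun k => if h : ∃ i, e i = k then s h.choose else Set.univ with ht
  have hchoose : ∀ i : ι, (⟨i, rfl⟩ : ∃ i', e i' = e i).choose = i := fun i =>
    he (⟨i, rfl⟩ : ∃ i', e i' = e i).choose_spec
  have htpos : ∀ i : ι, t (e i) = s i := by
    intro i
    rw [ht]
    simp only
    rw [dif_pos ⟨i, rfl⟩, hchoose i]
  have hts : ∀ (k : κ), MeasurableSet (t k) := by
    intro k
    rw [ht]
    by_cases h : ∃ i, e i = k
    · simp only [dif_pos h]; exact hs _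
    · simp only [dif_neg h]; exact MeasurableSet.univ
  have hpre : (fun (y : κ → ℝ) (i : ι) => y (e i)) ⁻¹' Set.univ.pi s = Set.univ.pi t := by
    ext y
    simp only [Set.mem_preimage, Set.mem_pi, Set.mem_univ, true_implies]
    constructor
    · intro h k
      rw [ht]
      by_cases hk : ∃ i, e i = k
      · simp only [dif_pos hk]
        have := h hk.choose
        rwa [hk.choose_spec] at this
      · simp [dif_neg hk]
    · intro h i
      have := h (e i)
      rwa [htpos i] at this
  rw [Measure.map_apply hmeas (MeasurableSet.univ_pi hs), hpre]
  have : stdGauss κ (Set.univ.pi t) = ∏ k, gaussianReal 0 1 (t k) := Measure.pi_pi _ _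
  rw [this]
  rw [← Finset.prod_filter_mul_prod_filter_not Finset.univ (fun k => k ∈ Finset.univ.image e)]
  have h2 : ∏ k ∈ Finset.univ.filter (fun k => k ∉ Finset.univ.image e),
      gaussianReal 0 1 (t k) = 1 := by
    refine Finset.prod_eq_one fun k hk => ?_
    simp only [Finset.mem_filter, Finset.mem_image, Finset.mem_univ, true_and] at hk
    have hne : ¬ ∃ i, e i = k := by
      rintro ⟨i, hi⟩; exact hk ⟨i, hi⟩
    rw [ht]
    simp only [dif_neg hne]
    exact measure_univ
  have h1 : Finset.univ.filter (fun k => k ∈ Finset.univ.image e) = Finset.univ.image e := by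
    ext k; simp
  rw [h2, mul_one, h1, Finset.prod_image (fun i _ j _ h => he h)]
  exact Finset.prod_congr rfl fun i _ => by rw [htpos i]

lemma stdGauss_map_rows {ι κ : Type*} [Fintype ι] [Fintype κ] [DecidableEq ι]
    [DecidableEq κ] (M : Matrix ι κ ℝ) (hM : M * Mᵀ = 1) :
    Measure.map M.mulVec (stdGauss κ) = stdGauss ι := by
  classical
  set E := EuclideanSpace ℝ κ
  set v : ι → E := fun i => WithLp.toLp 2 (fun k => M i k) with hv
  have hinner : ∀ (a b : E), (inner ℝ a b : ℝ) = ∑ k, a k * b k := by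
    intro a b
    rw [PiLp.inner_apply]
    simp [RCLike.inner_apply, mul_comm]
  have horth : Orthonormal ℝ v := by
    rw [orthonormal_iff_ite]
    intro i j
    rw [hinner]
    have : ∑ k, v i k * v j k = (M * Mᵀ) i j := by
      rw [Matrix.mul_apply]
      simp [hv, Matrix.transpose_apply]
    rw [this, hM, Matrix.one_apply]
  have hcard : Fintype.card ι ≤ Fintype.card κ := by
    have := horth.linearIndependent.fintype_card_le_finrank
    rwa [finrank_euclideanSpace] at this
  obtain ⟨e⟩ : Nonempty (ι ↪ κ) := Function.Embedding.nonempty_of_card_le hcard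
  set w : κ → E := fun k => if h : ∃ i, e i = k then v h.choose else 0 with hw
  have hchoose : ∀ i : ι, (⟨i, rfl⟩ : ∃ i', e i' = e i).choose = i := fun i =>
    e.injective (⟨i, rfl⟩ : ∃ i', e i' = e i).choose_spec
  have hwe : ∀ i : ι, w (e i) = v i := by
    intro i
    rw [hw]
    simp only
    rw [dif_pos ⟨i, rfl⟩, hchoose i]
  have hrestrict : Orthonormal ℝ ((Set.range e).restrict w) := by
    rw [orthonormal_iff_ite]
    rintro ⟨k, i, rfl⟩ ⟨k', i', rfl⟩
    change inner ℝ (w (e i)) (w (e i')) = _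
    simp only [Set.restrict_apply, hwe]
    rw [orthonormal_iff_ite.1 horth i i']
    by_cases h : i = i'
    · subst h; simp
    · rw [if_neg h, if_neg]
      intro hc
      exact h (e.injective (Subtype.ext_iff.1 hc))
  obtain ⟨b, hb⟩ := hrestrict.exists_orthonormalBasis_extension_of_card_eq
    (by rw [finrank_euclideanSpace])
  set Q : Matrix κ κ ℝ := Matrix.of fun k k' => b k k' with hQdef
  have hQ : Q * Qᵀ = 1 := by
    ext k k'
    rw [Matrix.mul_apply, Matrix.one_apply]
    have : ∑ j, Q k j * Qᵀ j k' = ∑ j, b k j * b k' j := by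
      refine Finset.sum_congr rfl fun j _ => ?_
      rw [Matrix.transpose_apply]
      rfl
    rw [this, ← hinner (b k) (b k'), orthonormal_iff_ite.1 b.orthonormal k k']
  have hMQ : ∀ i k, M i k = Q (e i) k := by
    intro i k
    have : b (e i) = w (e i) := hb (e i) ⟨i, rfl⟩
    rw [hQdef]
    show M i k = b (e i) k
    rw [this, hwe i]
  have hcomp : (M.mulVec : (κ → ℝ) → ι → ℝ)
      = (fun (y : κ → ℝ) (i : ι) => y (e i)) ∘ Q.mulVec := by
    funext x i
    simp only [Function.comp_apply, Matrix.mulVec, dotProduct]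
    exact Finset.sum_congr rfl fun k _ => by rw [hMQ i k]
  rw [hcomp, ← Measure.map_map (measurable_pi_lambda _ fun i => measurable_pi_apply (e i))
    (measurable_mulVec Q), stdGauss_map_orth hQ, stdGauss_map_marginal e.injective]

lemma map_uncurry_pi {I J α : Type*} [Fintype I] [Fintype J] [MeasurableSpace α]
    (μ : Measure α) [SigmaFinite μ] :
    Measure.map (fun (g : I → J → α) (p : I × J) => g p.1 p.2)
        (Measure.pi fun _ : I => Measure.pi fun _ : J => μ)
      = Measure.pi fun _ : I × J => μ := by
  have hmeas : Measurable fun (g : I → J → α) (p : I × J) => g p.1 p.2 :=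
    measurable_pi_lambda _ fun p =>
      (measurable_pi_apply p.2).comp (measurable_pi_apply p.1)
  refine (Measure.pi_eq fun s hs => ?_).symm
  rw [Measure.map_apply hmeas (MeasurableSet.univ_pi hs)]
  have hpre : (fun (g : I → J → α) (p : I × J) => g p.1 p.2) ⁻¹' Set.univ.pi s
      = Set.univ.pi fun i => Set.univ.pi fun j => s (i, j) := by
    ext g
    simp only [Set.mem_preimage, Set.mem_pi, Set.mem_univ, true_implies, Prod.forall]
  rw [hpre, Measure.pi_pi]
  rw [Fintype.prod_prod_type]
  exact Finset.prod_congr rfl fun i _ => Measure.pi_pi _ _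

/-- The distribution of a matrix with i.i.d. standard Gaussian entries. -/
noncomputable def gaussianMatrix (n : ℕ) : Measure (Fin n → Fin n → ℝ) :=
  Measure.pi fun _ : Fin n => Measure.pi fun _ : Fin n => gaussianReal 0 1

/-- If `A, B, C, D` are independent `n×n` matrices with i.i.d. standard Gaussian
entries and `P` is an orthogonal projection with `P⊥ = I − P`, then
`X = P⊥AP + PBP + P⊥CP⊥ + PDP⊥` has i.i.d. standard Gaussian entries. -/
theorem stmt4 {n : ℕ} (P : Matrix (Fin n) (Fin n) ℝ)
    (hP : P * P = P) (hPt : P.transpose = P) :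
    Measure.map
        (fun (ω : Fin 4 → Fin n → Fin n → ℝ) (i j : Fin n) =>
          ((1 - P) * Matrix.of (ω 0) * P + P * Matrix.of (ω 1) * P
            + (1 - P) * Matrix.of (ω 2) * (1 - P)
            + P * Matrix.of (ω 3) * (1 - P)) i j)
        (Measure.pi fun _ : Fin 4 => gaussianMatrix n)
      = gaussianMatrix n := by
  classical
  have hRt : (1 - P)ᵀ = 1 - P := by rw [Matrix.transpose_sub, Matrix.transpose_one, hPt]
  have hRR : (1 - P) * (1 - P) = 1 - P := by
    have h : (1 - P) * (1 - P) = 1 - P - P + P * P := by noncomm_ring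
    rw [h, hP]; abel
  -- entrywise orthogonality sums
  have hPk : ∀ i i', ∑ k, P i k * P i' k = P i i' := by
    intro i i'
    have h : (P * Pᵀ) i i' = P i i' := by rw [hPt, hP]
    simpa only [Matrix.mul_apply, Matrix.transpose_apply] using h
  have hRk : ∀ i i', ∑ k, (1 - P) i k * (1 - P) i' k = (1 - P) i i' := by
    intro i i'
    have h : (((1 - P) * (1 - P)ᵀ : Matrix (Fin n) (Fin n) ℝ)) i i' = (1 - P) i i' := by rw [hRt, hRR]
    simpa only [Matrix.mul_apply, Matrix.transpose_apply] using h
  have hPc : ∀ j j', ∑ l, P l j * P l j' = P j j' := by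
    intro j j'
    have h : (Pᵀ * P) j j' = P j j' := by rw [hPt, hP]
    simpa only [Matrix.mul_apply, Matrix.transpose_apply] using h
  have hRc : ∀ j j', ∑ l, (1 - P) l j * (1 - P) l j' = (1 - P) j j' := by
    intro j j'
    have h : (((1 - P)ᵀ * (1 - P) : Matrix (Fin n) (Fin n) ℝ)) j j' = (1 - P) j j' := by rw [hRt, hRR]
    simpa only [Matrix.mul_apply, Matrix.transpose_apply] using h
  set Lm : Fin 4 → Matrix (Fin n) (Fin n) ℝ := ![1 - P, P, 1 - P, P] with hLm
  set Rm : Fin 4 → Matrix (Fin n) (Fin n) ℝ := ![P, P, 1 - P, 1 - P] with hRm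
  set M : Matrix (Fin n × Fin n) ((Fin 4 × Fin n) × Fin n) ℝ :=
    Matrix.of fun p q => Lm q.1.1 p.1 q.1.2 * Rm q.1.1 q.2 p.2 with hMdef
  have hM : M * Mᵀ = 1 := by
    ext ⟨i, j⟩ ⟨i', j'⟩
    rw [Matrix.mul_apply]
    simp only [Matrix.transpose_apply, hMdef, Matrix.of_apply]
    rw [Fintype.sum_prod_type]
    simp_rw [Fintype.sum_prod_type]
    have hinner : ∀ a : Fin 4,
        ∑ k, ∑ l, (Lm a i k * Rm a l j) * (Lm a i' k * Rm a l j')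
          = (∑ k, Lm a i k * Lm a i' k) * (∑ l, Rm a l j * Rm a l j') := by
      intro a
      rw [Finset.sum_mul_sum]
      exact Finset.sum_congr rfl fun k _ => Finset.sum_congr rfl fun l _ => by ring
    calc (∑ a : Fin 4, ∑ k, ∑ l, (Lm a i k * Rm a l j) * (Lm a i' k * Rm a l j'))
        = ∑ a : Fin 4, (∑ k, Lm a i k * Lm a i' k) * (∑ l, Rm a l j * Rm a l j') :=
          Finset.sum_congr rfl fun a _ => hinner a
      _ = (1 : Matrix (Fin n) (Fin n) ℝ) i i' * (1 : Matrix (Fin n) (Fin n) ℝ) j j' := by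
          rw [Fin.sum_univ_four]
          simp only [hLm, hRm, Matrix.cons_val_zero, Matrix.cons_val_one, Matrix.head_cons,
            Matrix.cons_val_two, Matrix.tail_cons, Matrix.cons_val_three, Matrix.head_fin_const]
          rw [hPk, hRk, hPc, hRc]
          have e1 : (1 - P) i i' + P i i' = (1 : Matrix (Fin n) (Fin n) ℝ) i i' := by
            simp [Matrix.sub_apply]
          have e2 : P j j' + (1 - P) j j' = (1 : Matrix (Fin n) (Fin n) ℝ) j j' := by
            simp [Matrix.sub_apply]
          calc (1 - P) i i' * P j j' + P i i' * P j j' + (1 - P) i i' * (1 - P) j j'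
                + P i i' * (1 - P) j j'
              = ((1 - P) i i' + P i i') * (P j j' + (1 - P) j j') := by ring
            _ = _ := by rw [e1, e2]
      _ = (1 : Matrix (Fin n × Fin n) (Fin n × Fin n) ℝ) (i, j) (i', j') := by
          by_cases hii : i = i'
          · by_cases hjj : j = j' <;>
              simp [Matrix.one_apply, hii, hjj, Prod.ext_iff]
          · simp [Matrix.one_apply, hii, Prod.ext_iff]
  have hterm : ∀ (i j : Fin n) (X Z : Matrix (Fin n) (Fin n) ℝ) (w : Fin n → Fin n → ℝ),
      (X * Matrix.of w * Z) i j = ∑ k, ∑ l, X i k * Z l j * w k l := by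
    intro i j X Z w
    rw [Matrix.mul_apply]
    simp_rw [Matrix.mul_apply, Finset.sum_mul]
    rw [Finset.sum_comm]
    exact Finset.sum_congr rfl fun k _ => Finset.sum_congr rfl fun l _ => by
      rw [Matrix.of_apply]; ring
  have hfun : (fun (ω : Fin 4 → Fin n → Fin n → ℝ) (i j : Fin n) =>
          ((1 - P) * Matrix.of (ω 0) * P + P * Matrix.of (ω 1) * P
            + (1 - P) * Matrix.of (ω 2) * (1 - P)
            + P * Matrix.of (ω 3) * (1 - P)) i j)
      = (fun (y : Fin n × Fin n → ℝ) (i j : Fin n) => y (i, j))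
        ∘ M.mulVec
        ∘ (fun (g : (Fin 4 × Fin n) → Fin n → ℝ) (p : (Fin 4 × Fin n) × Fin n) => g p.1 p.2)
        ∘ (fun (ω : Fin 4 → Fin n → Fin n → ℝ) (p : Fin 4 × Fin n) => ω p.1 p.2) := by
    funext ω
    funext i j
    simp only [Function.comp_apply, Matrix.mulVec, dotProduct, hMdef, Matrix.of_apply]
    rw [Fintype.sum_prod_type]
    simp_rw [Fintype.sum_prod_type]
    rw [Fin.sum_univ_four]
    simp only [hLm, hRm, Matrix.cons_val_zero, Matrix.cons_val_one, Matrix.head_cons,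
      Matrix.cons_val_two, Matrix.tail_cons, Matrix.cons_val_three, Matrix.head_fin_const]
    rw [Matrix.add_apply, Matrix.add_apply, Matrix.add_apply, hterm, hterm, hterm, hterm]
  have hu1 : Measurable fun (ω : Fin 4 → Fin n → Fin n → ℝ) (p : Fin 4 × Fin n) => ω p.1 p.2 :=
    measurable_pi_lambda _ fun p => (measurable_pi_apply p.2).comp (measurable_pi_apply p.1)
  have hu2 : Measurable fun (g : (Fin 4 × Fin n) → Fin n → ℝ)
      (p : (Fin 4 × Fin n) × Fin n) => g p.1 p.2 :=
    measurable_pi_lambda _ fun p => (measurable_pi_apply p.2).comp (measurable_pi_apply p.1)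
  have hmv : Measurable (M.mulVec : ((Fin 4 × Fin n) × Fin n → ℝ) → Fin n × Fin n → ℝ) :=
    measurable_mulVec M
  have hcu : Measurable fun (y : Fin n × Fin n → ℝ) (i j : Fin n) => y (i, j) :=
    measurable_pi_lambda _ fun i => measurable_pi_lambda _ fun j => measurable_pi_apply (i, j)
  rw [hfun, ← Measure.map_map hcu (hmv.comp (hu2.comp hu1)),
    ← Measure.map_map hmv (hu2.comp hu1), ← Measure.map_map hu2 hu1]
  have h1 : Measure.map (fun (ω : Fin 4 → Fin n → Fin n → ℝ) (p : Fin 4 × Fin n) => ω p.1 p.2)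
      (Measure.pi fun _ : Fin 4 => gaussianMatrix n)
      = Measure.pi fun _ : Fin 4 × Fin n => Measure.pi fun _ : Fin n => gaussianReal 0 1 :=
    map_uncurry_pi _
  have h2 : Measure.map (fun (g : (Fin 4 × Fin n) → Fin n → ℝ)
        (p : (Fin 4 × Fin n) × Fin n) => g p.1 p.2)
      (Measure.pi fun _ : Fin 4 × Fin n => Measure.pi fun _ : Fin n => gaussianReal 0 1)
      = stdGauss ((Fin 4 × Fin n) × Fin n) := map_uncurry_pi _
  have h3 : Measure.map M.mulVec (stdGauss ((Fin 4 × Fin n) × Fin n))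
      = stdGauss (Fin n × Fin n) := stdGauss_map_rows M hM
  have h4 : Measure.map (fun (y : Fin n × Fin n → ℝ) (i j : Fin n) => y (i, j))
      (stdGauss (Fin n × Fin n)) = gaussianMatrix n := by
    have hun : Measure.map (fun (g : Fin n → Fin n → ℝ) (p : Fin n × Fin n) => g p.1 p.2)
        (gaussianMatrix n) = stdGauss (Fin n × Fin n) := map_uncurry_pi _
    have hunm : Measurable fun (g : Fin n → Fin n → ℝ) (p : Fin n × Fin n) => g p.1 p.2 :=
      measurable_pi_lambda _ fun p => (measurable_pi_apply p.2).comp (measurable_pi_apply p.1)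
    rw [← hun, Measure.map_map hcu hunm]
    have hid : (fun (y : Fin n × Fin n → ℝ) (i j : Fin n) => y (i, j))
        ∘ (fun (g : Fin n → Fin n → ℝ) (p : Fin n × Fin n) => g p.1 p.2) = id := rfl
    rw [hid, Measure.map_id]
  rw [h1, h2, h3, h4]
end

section
/- Let R : S_n → ℝ ∪ {+∞} be a proper convex function, X₀ ∈ S_n, and K̃ = {V : R(X₀ + V) ≤ R(X₀)}. Assume ∂R(X₀) is non-empty and 0 ∉ ∂R(X₀). Let D(K̃) = {τV : τ ≥ 0, V ∈ K̃} be the cone generated by K̃ and let H be any fixed symmetric matrix. Then sup_{V ∈ D(K̃), ‖V‖_F = 1} ⟨H, V⟩ ≤ inf_{λ ≥ 0} inf_{S ∈ ∂R(X₀)} ‖H − λS‖_F. -/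
open MeasureTheory

/-- Polarity bound: for a proper convex `R : S_n → ℝ ∪ {+∞}`, with
`K̃ = {V : R(X₀+V) ≤ R(X₀)}`, nonempty subdifferential `∂R(X₀)` not containing `0`,
and any fixed symmetric `H`: every unit-Frobenius-norm element `V` of the cone
generated by `K̃` satisfies `⟨H, V⟩ ≤ ‖H − λS‖_F` for all `λ ≥ 0`, `S ∈ ∂R(X₀)`,
i.e. `sup_{V} ⟨H,V⟩ ≤ inf_{λ≥0} inf_{S∈∂R(X₀)} ‖H − λS‖_F`. -/
theorem stmt16 {n : ℕ} (R : Matrix (Fin n) (Fin n) ℝ → EReal)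
    (hbot : ∀ X, R X ≠ ⊥)
    (hproper : ∃ X : Matrix (Fin n) (Fin n) ℝ, X.IsSymm ∧ R X ≠ ⊤)
    (hconvex : ∀ X Y : Matrix (Fin n) (Fin n) ℝ, X.IsSymm → Y.IsSymm →
      ∀ t : ℝ, 0 ≤ t → t ≤ 1 →
        R (t • X + (1 - t) • Y) ≤ (t : EReal) * R X + ((1 - t : ℝ) : EReal) * R Y)
    (X₀ : Matrix (Fin n) (Fin n) ℝ) (hX₀ : X₀.IsSymm)
    (subdiff : Set (Matrix (Fin n) (Fin n) ℝ))
    (hsub : subdiff = {S | S.IsSymm ∧ ∀ Y : Matrix (Fin n) (Fin n) ℝ, Y.IsSymm →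
        R X₀ + (((∑ i, ∑ j, S i j * (Y - X₀) i j : ℝ)) : EReal) ≤ R Y})
    (hne : subdiff.Nonempty) (h0 : (0 : Matrix (Fin n) (Fin n) ℝ) ∉ subdiff)
    (H : Matrix (Fin n) (Fin n) ℝ) (hHs : H.IsSymm) :
    ∀ V : Matrix (Fin n) (Fin n) ℝ,
      (∃ τ : ℝ, 0 ≤ τ ∧ ∃ W : Matrix (Fin n) (Fin n) ℝ,
        W.IsSymm ∧ R (X₀ + W) ≤ R X₀ ∧ V = τ • W) →
      Real.sqrt (∑ i, ∑ j, V i j ^ 2) = 1 →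
      ∀ lam : ℝ, 0 ≤ lam → ∀ S ∈ subdiff,
        (∑ i, ∑ j, H i j * V i j)
          ≤ Real.sqrt (∑ i, ∑ j, (H i j - lam * S i j) ^ 2) := by
  intro V hV hVnorm lam hlam S hS
  obtain ⟨τ, hτ, W, hWs, hRW, hVW⟩ := hV
  rw [hsub] at hS
  obtain ⟨hSs, hSineq⟩ := hS
  -- R X₀ is finite
  have hX₀top : R X₀ ≠ ⊤ := by
    intro htop
    obtain ⟨Y, hYs, hYtop⟩ := hproper
    have := hSineq Y hYs
    rw [htop] at this
    have : (⊤ : EReal) ≤ R Y := by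
      refine le_trans (le_of_eq ?_) this
      rw [EReal.top_add_of_ne_bot (by exact_mod_cast EReal.coe_ne_bot _)]
    exact hYtop (top_le_iff.mp this)
  obtain ⟨r, hr⟩ : ∃ r : ℝ, R X₀ = (r : EReal) := by
    lift R X₀ to ℝ using ⟨hX₀top, hbot X₀⟩ with r
    exact ⟨r, rfl⟩
  -- ⟨S, W⟩ ≤ 0
  have hSW : (∑ i, ∑ j, S i j * W i j) ≤ 0 := by
    have h1 := hSineq (X₀ + W) (by
      rw [Matrix.IsSymm] at *
      rw [Matrix.transpose_add, hX₀, hWs])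
    have h2 : X₀ + W - X₀ = W := add_sub_cancel_left X₀ W
    rw [h2, hr] at h1
    have h3 : ((r : EReal) + ((∑ i, ∑ j, S i j * W i j : ℝ) : EReal)) ≤ (r : EReal) := by
      exact le_trans h1 (hr ▸ hRW)
    rw [← EReal.coe_add, EReal.coe_le_coe_iff] at h3
    linarith
  -- ⟨S, V⟩ ≤ 0
  have hSV : (∑ i, ∑ j, S i j * V i j) ≤ 0 := by
    subst hVW
    have : (∑ i, ∑ j, S i j * (τ • W) i j) = τ * ∑ i, ∑ j, S i j * W i j := by
      rw [Finset.mul_sum]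
      refine Finset.sum_congr rfl fun i _ => ?_
      rw [Finset.mul_sum]
      refine Finset.sum_congr rfl fun j _ => ?_
      simp [Matrix.smul_apply]
      ring
    rw [this]
    exact mul_nonpos_of_nonneg_of_nonpos hτ hSW
  -- Cauchy-Schwarz
  have hCS : (∑ i, ∑ j, (H i j - lam * S i j) * V i j) ≤
      Real.sqrt (∑ i, ∑ j, (H i j - lam * S i j) ^ 2) *
        Real.sqrt (∑ i, ∑ j, V i j ^ 2) := by
    set f : Fin n × Fin n → ℝ := fun p => H p.1 p.2 - lam * S p.1 p.2 with hf
    set g : Fin n × Fin n → ℝ := fun p => V p.1 p.2 with hg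
    have h := Finset.sum_mul_sq_le_sq_mul_sq Finset.univ f g
    have h2 : (∑ p : Fin n × Fin n, f p * g p) ≤
        Real.sqrt (∑ p : Fin n × Fin n, f p ^ 2) * Real.sqrt (∑ p : Fin n × Fin n, g p ^ 2) :=
      calc (∑ p : Fin n × Fin n, f p * g p) ≤ |∑ p : Fin n × Fin n, f p * g p| := le_abs_self _
        _ = Real.sqrt ((∑ p : Fin n × Fin n, f p * g p) ^ 2) := (Real.sqrt_sq_eq_abs _).symm
        _ ≤ Real.sqrt ((∑ p : Fin n × Fin n, f p ^ 2) * ∑ p : Fin n × Fin n, g p ^ 2) :=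
            Real.sqrt_le_sqrt h
        _ = _ := Real.sqrt_mul (Finset.sum_nonneg fun p _ => sq_nonneg _) _
    simpa [hf, hg, Fintype.sum_prod_type] using h2
  rw [hVnorm, mul_one] at hCS
  have key : (∑ i, ∑ j, H i j * V i j) =
      (∑ i, ∑ j, (H i j - lam * S i j) * V i j) + lam * ∑ i, ∑ j, S i j * V i j := by
    rw [Finset.mul_sum, ← Finset.sum_add_distrib]
    refine Finset.sum_congr rfl fun i _ => ?_
    rw [Finset.mul_sum, ← Finset.sum_add_distrib]
    refine Finset.sum_congr rfl fun j _ => ?_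
    ring
  rw [key]
  have : lam * ∑ i, ∑ j, S i j * V i j ≤ 0 := mul_nonpos_of_nonneg_of_nonpos hlam hSV
  linarith
end
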